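/- arXiv:2510.01729 — 3 statements merged into one kernel-verified Lean document; each statement's English description precedes it below -/
import Mathlib

section
/- Let $\epsilon \in (0,1)$, $S > 1+\epsilon$, $r \geq 2$, $K > 0$, and let $\beta_1, \dots, \beta_k$ be reals with $1+\epsilon \leq \beta_i \leq S$ for all $i$ and $\sum_{i=1}^k \beta_i^{1/r} \geq K$. Then $\prod_{i=1}^k \beta_i \geq \min\left\{ S^{K/S^{1/r}},\ (1+\epsilon)^{K/(1+\epsilon)^{1/r}} \right\}$. -/
open Real

lemma aux1' (p s : ℝ) (hp : 0 < p) (hps : p ≤ s) (hs : s ≤ 1) :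
    p * Real.exp s ≤ s * Real.exp p := by
  have h1 : (1 - (s - p)) * Real.exp (s - p) ≤ 1 := by
    have := Real.add_one_le_exp (-(s - p))
    have hE : 0 < Real.exp (s - p) := Real.exp_pos _
    have : (1 - (s - p)) ≤ Real.exp (-(s - p)) := by linarith
    calc (1 - (s - p)) * Real.exp (s - p) ≤ Real.exp (-(s - p)) * Real.exp (s - p) := by
          apply mul_le_mul_of_nonneg_right this hE.le
      _ = 1 := by rw [← Real.exp_add]; simp
  have hE1 : 1 ≤ Real.exp (s - p) := by
    have := Real.add_one_le_exp (s - p); linarith [Real.add_one_le_exp (s - p)]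
  have key : p * Real.exp (s - p) ≤ s := by
    nlinarith [Real.exp_pos (s - p)]
  have : Real.exp s = Real.exp (s - p) * Real.exp p := by
    rw [← Real.exp_add]; ring_nf
  rw [this]
  calc p * (Real.exp (s - p) * Real.exp p) = (p * Real.exp (s - p)) * Real.exp p := by ring
    _ ≤ s * Real.exp p := by
        apply mul_le_mul_of_nonneg_right key (Real.exp_pos _).le

lemma aux2' (s q : ℝ) (hs : 1 ≤ s) (hsq : s ≤ q) :
    q * Real.exp s ≤ s * Real.exp q := by
  have h1 : 1 + (q - s) ≤ Real.exp (q - s) := by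
    have := Real.add_one_le_exp (q - s); linarith
  have key : q ≤ s * Real.exp (q - s) := by
    nlinarith
  have : Real.exp q = Real.exp (q - s) * Real.exp s := by
    rw [← Real.exp_add]; ring_nf
  rw [this]
  calc q * Real.exp s ≤ (s * Real.exp (q - s)) * Real.exp s := by
        apply mul_le_mul_of_nonneg_right key (Real.exp_pos _).le
    _ = s * (Real.exp (q - s) * Real.exp s) := by ring

lemma hmin' (A B t : ℝ) (hA : 1 < A) (hAt : A ≤ t) (htB : t ≤ B) :
    min (Real.log A / A) (Real.log B / B) ≤ Real.log t / t := by
  have hA0 : 0 < A := by linarith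
  have ht0 : 0 < t := by linarith
  have hB0 : 0 < B := by linarith
  by_cases hte : t ≤ Real.exp 1
  · refine le_trans (min_le_left _ _) ?_
    have hp : 0 < Real.log A := Real.log_pos hA
    have hps : Real.log A ≤ Real.log t := Real.log_le_log hA0 hAt
    have hs : Real.log t ≤ 1 := by
      have := Real.log_le_log ht0 hte
      rwa [Real.log_exp] at this
    have := aux1' (Real.log A) (Real.log t) hp hps hs
    rw [Real.exp_log hA0, Real.exp_log ht0] at this
    rw [div_le_div_iff₀ hA0 ht0]
    linarith
  · refine le_trans (min_le_right _ _) ?_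
    push_neg at hte
    have hs : 1 ≤ Real.log t := by
      have := Real.log_le_log (Real.exp_pos 1) hte.le
      rwa [Real.log_exp] at this
    have hsq : Real.log t ≤ Real.log B := Real.log_le_log ht0 htB
    have := aux2' (Real.log t) (Real.log B) hs hsq
    rw [Real.exp_log ht0, Real.exp_log hB0] at this
    rw [div_le_div_iff₀ hB0 ht0]
    linarith

theorem stmt11 (ε S r K : ℝ) (hε : ε ∈ Set.Ioo (0:ℝ) 1) (hS : 1 + ε < S)
    (hr : 2 ≤ r) (hK : 0 < K) (k : ℕ) (β : Fin k → ℝ)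
    (hlo : ∀ i, 1 + ε ≤ β i) (hhi : ∀ i, β i ≤ S)
    (hsum : K ≤ ∑ i, β i ^ (1 / r)) :
    min (S ^ (K / S ^ (1 / r))) ((1 + ε) ^ (K / (1 + ε) ^ (1 / r))) ≤ ∏ i, β i := by
  obtain ⟨hε0, hε1⟩ := hε
  have hr0 : 0 < r := by linarith
  have hinv : 0 < 1 / r := by positivity
  have h1ε : (1:ℝ) < 1 + ε := by linarith
  have h1ε0 : (0:ℝ) < 1 + ε := by linarith
  have hS1 : (1:ℝ) < S := by linarith
  have hS0 : (0:ℝ) < S := by linarith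
  set A := (1 + ε) ^ (1 / r) with hAdef
  set B := S ^ (1 / r) with hBdef
  have hA1 : 1 < A := Real.one_lt_rpow_iff_of_pos h1ε0 |>.mpr (Or.inl ⟨h1ε, hinv⟩)
  have hB1 : 1 < B := Real.one_lt_rpow_iff_of_pos hS0 |>.mpr (Or.inl ⟨hS1, hinv⟩)
  have hA0 : 0 < A := by linarith
  have hB0 : 0 < B := by linarith
  set c := min (Real.log A / A) (Real.log B / B) with hcdef
  have hc0 : 0 < c := by
    apply lt_min
    · exact div_pos (Real.log_pos hA1) hA0
    · exact div_pos (Real.log_pos hB1) hB0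
  -- per-term bound
  have hbpos : ∀ i, 0 < β i := fun i => lt_of_lt_of_le h1ε0 (hlo i)
  have per : ∀ i, c * β i ^ (1 / r) ≤ 1 / r * Real.log (β i) := by
    intro i
    have ht : β i ^ (1 / r) = (β i) ^ (1 / r) := rfl
    set t := β i ^ (1 / r) with htdef
    have hAt : A ≤ t := Real.rpow_le_rpow h1ε0.le (hlo i) hinv.le
    have htB : t ≤ B := Real.rpow_le_rpow (hbpos i).le (hhi i) hinv.le
    have ht0 : 0 < t := Real.rpow_pos_of_pos (hbpos i) _
    have hlt : Real.log t = 1 / r * Real.log (β i) := Real.log_rpow (hbpos i) _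
    have hmin := hmin' A B t hA1 hAt htB
    rw [← hcdef] at hmin
    have : c * t ≤ Real.log t := (le_div_iff₀ ht0).mp hmin
    rw [hlt] at this
    exact this
  -- sum the per-term bounds
  have hsum2 : c * K ≤ 1 / r * ∑ i, Real.log (β i) := by
    calc c * K ≤ c * ∑ i, β i ^ (1 / r) := by
          apply mul_le_mul_of_nonneg_left hsum hc0.le
      _ = ∑ i, c * β i ^ (1 / r) := Finset.mul_sum _ _ _
      _ ≤ ∑ i, 1 / r * Real.log (β i) := Finset.sum_le_sum fun i _ => per i
      _ = 1 / r * ∑ i, Real.log (β i) := (Finset.mul_sum _ _ _).symm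
  have hsum3 : r * c * K ≤ ∑ i, Real.log (β i) := by
    have := mul_le_mul_of_nonneg_left hsum2 hr0.le
    have hrr : r * (1 / r * ∑ i, Real.log (β i)) = ∑ i, Real.log (β i) := by
      field_simp
    rw [hrr] at this
    linarith
  -- product as exp of sum of logs
  have hprod : ∏ i, β i = Real.exp (∑ i, Real.log (β i)) := by
    rw [Real.exp_sum]
    exact Finset.prod_congr rfl fun i _ => (Real.exp_log (hbpos i)).symm
  -- rewrite the target min as exp
  have hlogA : Real.log A = 1 / r * Real.log (1 + ε) := Real.log_rpow h1ε0 _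
  have hlogB : Real.log B = 1 / r * Real.log S := Real.log_rpow hS0 _
  have hSterm : S ^ (K / B) = Real.exp (K * r * (Real.log B / B)) := by
    rw [Real.rpow_def_of_pos hS0]
    congr 1
    have : Real.log S = r * Real.log B := by
      rw [hlogB]; field_simp
    rw [this]
    field_simp
  have hAterm : (1 + ε) ^ (K / A) = Real.exp (K * r * (Real.log A / A)) := by
    rw [Real.rpow_def_of_pos h1ε0]
    congr 1
    have : Real.log (1 + ε) = r * Real.log A := by
      rw [hlogA]; field_simp
    rw [this]
    field_simp
  rw [hSterm, hAterm, hprod]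
  rw [min_comm, ← Real.exp_monotone.map_min]
  apply Real.exp_le_exp.mpr
  have : min (K * r * (Real.log A / A)) (K * r * (Real.log B / B)) = K * r * c := by
    rw [hcdef, mul_min_of_nonneg _ _ (by positivity : (0:ℝ) ≤ K * r)]
  rw [this]
  calc K * r * c = r * c * K := by ring
    _ ≤ ∑ i, Real.log (β i) := hsum3
end

section
/- For any $x, \delta \in \mathbb{R}^n$ and $p \geq 2$, letting $r_i = |x_i|^{p-2}$ and $g_i = p\,|x_i|^{p-2} x_i$, we have $\frac{p}{8}\langle r, \delta^2 \rangle + \frac{1}{2^{p+1}}\|\delta\|_p^p \leq \|x+\delta\|_p^p - \|x\|_p^p - \langle g, \delta \rangle \leq 2p^2 \langle r, \delta^2 \rangle + p^p \|\delta\|_p^p$. -/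
/-!
Let `D(a, d) = |a + d|^p - |a|^p - p |a|^(p-2) a d` be the Bregman divergence of `|·|^p`. Both
sides of the inequality are sums over coordinates, and `D(a, d)`, `|a|^(p-2) d^2`, `|d|^p` are all
`p`-homogeneous in `(a, d)`, so it suffices to bound `D(c, 1)`. Taylor's formula with integral
remainder gives `D(c, 1) = p (p-1) ∫₀¹ (1-s) |c+s|^(p-2) ds`.

Upper bound: `|c + s| ≤ |c| + 1`, and `(|c| + 1)^(p-2)` is at most `e |c|^(p-2)` when `|c| > p - 2`
(as `(1 + 1/x)^x ≤ e`) and at most `(p-1)^(p-2)` otherwise.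

Lower bound: comparing the integrand pointwise with that of `c = 0` resp. `c = -1` gives
`D(c, 1) ≥ max(1, p(p-1)/2 c^(p-2))` for `c ≥ 0` and `D(c, 1) ≥ (p-1) |c|^(p-2)` for `c ≤ -1`.
For `-1 ≤ c ≤ 0` the closed form `D(c, 1) = (1-t)^p + t^(p-2) (p t - t^2)`, `t = -c`, is
estimated directly, splitting at `t = 1/4` and `t = 1/2`.
-/

open Real Set

noncomputable def bregmanAbsRpow (p a d : ℝ) : ℝ :=
  |a + d| ^ p - |a| ^ p - p * |a| ^ (p - 2) * a * d

theorem abs_rpow_eq_abs_rpow_sub_two_mul_sq {p : ℝ} (hp : p ≠ 0) (x : ℝ) :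
    |x| ^ p = |x| ^ (p - 2) * x ^ 2 := by
  rw [← sq_abs, ← rpow_two, ← rpow_add' (abs_nonneg x) (by simpa using hp)]
  ring_nf

theorem bregmanAbsRpow_mul {p : ℝ} (hp : p ≠ 0) (l a d : ℝ) :
    bregmanAbsRpow p (l * a) (l * d) = |l| ^ p * bregmanAbsRpow p a d := by
  simp only [bregmanAbsRpow, ← mul_add, abs_mul, mul_rpow (abs_nonneg l) (abs_nonneg _),
    abs_rpow_eq_abs_rpow_sub_two_mul_sq hp l]
  ring

theorem bregmanAbsRpow_mul_one {p : ℝ} (hp : p ≠ 0) (d c : ℝ) :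
    bregmanAbsRpow p (d * c) d = |d| ^ p * bregmanAbsRpow p c 1 := by
  simpa using bregmanAbsRpow_mul hp d c 1

theorem bregmanAbsRpow_one_eq {p : ℝ} (hp : p ≠ 0) (c : ℝ) :
    bregmanAbsRpow p c 1 = |c + 1| ^ p - |c| ^ (p - 2) * (c ^ 2 + p * c) := by
  rw [bregmanAbsRpow, abs_rpow_eq_abs_rpow_sub_two_mul_sq hp c]
  ring

theorem abs_mul_rpow_sub_two_mul_sq {p : ℝ} (hp : p ≠ 0) (d c : ℝ) :
    |d * c| ^ (p - 2) * d ^ 2 = |d| ^ p * |c| ^ (p - 2) := by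
  rw [abs_mul, mul_rpow (abs_nonneg d) (abs_nonneg c), abs_rpow_eq_abs_rpow_sub_two_mul_sq hp d]
  ring

theorem hasDerivAt_abs_rpow_mul_self {q : ℝ} (hq : 0 ≤ q) (t : ℝ) :
    HasDerivAt (fun t : ℝ => |t| ^ q * t) ((q + 1) * |t| ^ q) t := by
  rcases eq_or_ne t 0 with rfl | ht
  · rw [hasDerivAt_iff_tendsto_slope]
    have hlim : Filter.Tendsto (fun s : ℝ => |s| ^ q) (nhdsWithin 0 {0}ᶜ) (nhds (|0| ^ q)) :=
      ((continuous_abs.rpow_const fun _ => Or.inr hq).tendsto 0).mono_left nhdsWithin_le_nhds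
    have hval : (q + 1) * |(0:ℝ)| ^ q = |0| ^ q := by
      rcases eq_or_lt_of_le hq with rfl | hq <;> simp [zero_rpow, *, ne_of_gt]
    rw [hval]
    refine hlim.congr' (eventually_nhdsWithin_of_forall fun s (hs : s ≠ 0) => ?_)
    simp [slope_def_field, hs]
  · have ht' : |t| ≠ 0 := abs_ne_zero.2 ht
    refine (((hasDerivAt_abs ht).rpow_const (Or.inl ht')).mul (hasDerivAt_id t)).congr_deriv ?_
    rw [rpow_sub_one ht', id, mul_comm _ t, ← mul_assoc, ← mul_assoc, mul_comm t, sign_mul_self]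
    field_simp

theorem continuous_one_sub_mul_rpow {q : ℝ} (hq : 0 ≤ q) {u : ℝ → ℝ} (hu : Continuous u) :
    Continuous fun s => (1 - s) * u s ^ q := by
  fun_prop (disch := exact fun _ => Or.inr hq)

theorem bregmanAbsRpow_one_eq_integral {p : ℝ} (hp : 2 ≤ p) (c : ℝ) :
    bregmanAbsRpow p c 1 = p * (p - 1) * ∫ s in (0:ℝ)..1, (1 - s) * |c + s| ^ (p - 2) := by
  have hderiv : ∀ s : ℝ, HasDerivAt
      (fun s => |c + 1| ^ p - |c + s| ^ p - p * (|c + s| ^ (p - 2) * (c + s)) * (1 - s))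
      (-(p * (p - 1) * ((1 - s) * |c + s| ^ (p - 2)))) s := by
    intro s
    have hshift := (hasDerivAt_id s).const_add c
    have hf := (hasDerivAt_abs_rpow (c + s) (by linarith : 1 < p)).comp s hshift
    have hg := (hasDerivAt_abs_rpow_mul_self (by linarith : 0 ≤ p - 2) (c + s)).comp s hshift
    refine ((hf.const_sub _).sub ((hg.const_mul p).mul
      ((hasDerivAt_id s).const_sub 1))).congr_deriv ?_
    simp only [id, Function.comp_apply]
    ring
  have hcont := continuous_one_sub_mul_rpow (by linarith : 0 ≤ p - 2)
    (continuous_abs.comp (continuous_const.add continuous_id' : Continuous fun s : ℝ => c + s))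
  have hftc := intervalIntegral.integral_eq_sub_of_hasDerivAt (fun s _ => hderiv s)
    ((hcont.const_mul (p * (p - 1))).neg.intervalIntegrable 0 1)
  rw [intervalIntegral.integral_neg, intervalIntegral.integral_const_mul] at hftc
  simp only [bregmanAbsRpow]
  norm_num at hftc
  linarith

theorem integral_one_sub_mul_rpow_mono {q : ℝ} (hq : 0 ≤ q) {u v : ℝ → ℝ}
    (hu : Continuous u) (hv : Continuous v) (huv : ∀ s ∈ Icc (0:ℝ) 1, 0 ≤ u s ∧ u s ≤ v s) :
    ∫ s in (0:ℝ)..1, (1 - s) * u s ^ q ≤ ∫ s in (0:ℝ)..1, (1 - s) * v s ^ q :=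
  intervalIntegral.integral_mono_on zero_le_one
    ((continuous_one_sub_mul_rpow hq hu).intervalIntegrable 0 1)
    ((continuous_one_sub_mul_rpow hq hv).intervalIntegrable 0 1) fun s hs =>
      mul_le_mul_of_nonneg_left (rpow_le_rpow (huv s hs).1 (huv s hs).2 hq) (by linarith [hs.2])

theorem integral_one_sub_mul_const (r : ℝ) : ∫ s in (0:ℝ)..1, (1 - s) * r = r / 2 := by
  rw [intervalIntegral.integral_mul_const,
    intervalIntegral.integral_sub intervalIntegrable_const intervalIntegral.intervalIntegrable_id]
  norm_num
  ring

theorem mul_le_bregmanAbsRpow_one_of_mul_abs_le {p k c c' : ℝ} (hp : 2 ≤ p) (hk : 0 ≤ k)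
    (h : ∀ s ∈ Icc (0:ℝ) 1, k * |c' + s| ≤ |c + s|) :
    k ^ (p - 2) * bregmanAbsRpow p c' 1 ≤ bregmanAbsRpow p c 1 := by
  have hmono := integral_one_sub_mul_rpow_mono (by linarith : 0 ≤ p - 2)
    (by fun_prop : Continuous fun s : ℝ => k * |c' + s|)
    (by fun_prop : Continuous fun s : ℝ => |c + s|)
    fun s hs => ⟨by positivity, h s hs⟩
  simp only [mul_rpow hk (abs_nonneg _), mul_left_comm _ (k ^ (p - 2)),
    intervalIntegral.integral_const_mul] at hmono
  rw [bregmanAbsRpow_one_eq_integral hp, bregmanAbsRpow_one_eq_integral hp]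
  have hpp : 0 ≤ p * (p - 1) := by nlinarith
  nlinarith [mul_le_mul_of_nonneg_left hmono hpp]

theorem mul_rpow_le_bregmanAbsRpow_one {p m c : ℝ} (hp : 2 ≤ p) (hm : 0 ≤ m)
    (h : ∀ s ∈ Icc (0:ℝ) 1, m ≤ |c + s|) :
    p * (p - 1) / 2 * m ^ (p - 2) ≤ bregmanAbsRpow p c 1 := by
  have hmono := integral_one_sub_mul_rpow_mono (by linarith : 0 ≤ p - 2) continuous_const
    (by fun_prop : Continuous fun s : ℝ => |c + s|) fun s hs => ⟨hm, h s hs⟩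
  rw [integral_one_sub_mul_const] at hmono
  rw [bregmanAbsRpow_one_eq_integral hp]
  have hpp : 0 ≤ p * (p - 1) := by nlinarith
  nlinarith [mul_le_mul_of_nonneg_left hmono hpp]

theorem bregmanAbsRpow_one_le_mul_rpow {p M c : ℝ} (hp : 2 ≤ p)
    (h : ∀ s ∈ Icc (0:ℝ) 1, |c + s| ≤ M) :
    bregmanAbsRpow p c 1 ≤ p * (p - 1) / 2 * M ^ (p - 2) := by
  have hmono := integral_one_sub_mul_rpow_mono (by linarith : 0 ≤ p - 2)
    (by fun_prop : Continuous fun s : ℝ => |c + s|) continuous_const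
    fun s hs => ⟨abs_nonneg _, h s hs⟩
  rw [integral_one_sub_mul_const] at hmono
  rw [bregmanAbsRpow_one_eq_integral hp]
  have hpp : 0 ≤ p * (p - 1) := by nlinarith
  nlinarith [mul_le_mul_of_nonneg_left hmono hpp]

theorem one_div_two_rpow_add_one_le {p : ℝ} (hp : 2 ≤ p) : 1 / (2:ℝ) ^ (p + 1) ≤ 1 / 8 := by
  have h : (2:ℝ) ^ (3:ℝ) ≤ 2 ^ (p + 1) := rpow_le_rpow_of_exponent_le one_le_two (by linarith)
  norm_num at h
  exact one_div_le_one_div_of_le (by norm_num) h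

theorem mul_half_rpow_sub_two_le {p : ℝ} (hp : 2 ≤ p) : p * (1 / 2) ^ (p - 2) ≤ 2 := by
  have h_bernoulli := one_add_mul_self_le_rpow_one_add (s := 1) (by norm_num)
    (by linarith : 1 ≤ p - 1)
  have h_cancel : (2:ℝ) ^ (p - 1) * (1 / 2) ^ (p - 2) = 2 := by
    rw [show p - 1 = p - 2 + 1 by ring, rpow_add two_pos, mul_right_comm,
      ← mul_rpow (by norm_num) (by norm_num)]
    norm_num
  norm_num at h_bernoulli
  nlinarith [rpow_pos_of_pos (by norm_num : (0:ℝ) < 1 / 2) (p - 2)]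

theorem le_one_sub_rpow_add_rpow_mul {p t : ℝ} (hp : 2 ≤ p) (ht0 : 0 ≤ t) (ht1 : t ≤ 1) :
    p / 8 * t ^ (p - 2) + 1 / 2 ^ (p + 1) ≤ (1 - t) ^ p + t ^ (p - 2) * (p * t - t ^ 2) := by
  set y : ℝ := (1 / 2) ^ (p - 2)
  have hy0 : 0 < y := by positivity
  have h_half_pow (r : ℝ) : ((1:ℝ) / 2) ^ (p - 2 + r) = y * (1 / 2) ^ r :=
    rpow_add (by norm_num) _ _
  have h_top : 1 / (2:ℝ) ^ (p + 1) = y / 8 := by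
    rw [div_eq_mul_inv, one_mul, ← inv_rpow zero_le_two, ← one_div,
      show p + 1 = p - 2 + 3 by ring, h_half_pow]
    norm_num
    ring
  have h_half : ((1:ℝ) / 2) ^ p = y / 4 := by
    rw [show p = p - 2 + 2 by ring, h_half_pow]
    norm_num
    ring
  have h_quarter : ((1:ℝ) / 4) ^ (p - 2) = y ^ 2 := by
    rw [sq, ← mul_rpow (by norm_num) (by norm_num)]; norm_num
  have h_three_quarters : 9 / 16 * y ≤ ((3:ℝ) / 4) ^ p := by
    have h := rpow_le_rpow_of_exponent_le (by norm_num : (1:ℝ) ≤ 3 / 2) hp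
    rw [rpow_two] at h
    rw [show (3:ℝ) / 4 = 3 / 2 * (1 / 2) by norm_num, mul_rpow (by norm_num) (by norm_num),
      h_half]
    nlinarith
  have h_py : p * y ≤ 2 := mul_half_rpow_sub_two_le hp
  rw [h_top]
  set T := t ^ (p - 2)
  have hT0 : 0 ≤ T := by positivity
  have hq : 0 ≤ p - 2 := by linarith
  rcases le_or_gt (1 / 2) t with ht | ht
  · have hTy : y ≤ T := rpow_le_rpow (by norm_num) ht hq
    have hpt : p / 8 + 1 / 2 ≤ p * t - t ^ 2 := by nlinarith
    nlinarith [mul_le_mul_of_nonneg_left hpt hT0, rpow_nonneg (by linarith : 0 ≤ 1 - t) p]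
  rcases le_or_gt (1 / 4) t with ht' | ht'
  · have hpt : p / 8 ≤ p * t - t ^ 2 := by nlinarith
    have hU : y / 4 ≤ (1 - t) ^ p := by
      rw [← h_half]; exact rpow_le_rpow (by norm_num) (by linarith) (by linarith)
    nlinarith [mul_le_mul_of_nonneg_left hpt hT0]
  · have hTy : T ≤ y ^ 2 := by
      rw [← h_quarter]; exact rpow_le_rpow ht0 ht'.le hq
    have hU : 9 / 16 * y ≤ (1 - t) ^ p :=
      h_three_quarters.trans (rpow_le_rpow (by norm_num) (by linarith) (by linarith))
    have hpt : 0 ≤ p * t - t ^ 2 := by nlinarith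
    nlinarith [mul_nonneg hT0 hpt, mul_le_mul_of_nonneg_left hTy (by linarith : 0 ≤ p / 8)]

theorem add_one_rpow_le {q x : ℝ} (hq : 0 ≤ q) (hx : 0 ≤ x) :
    (x + 1) ^ q ≤ exp 1 * x ^ q + (q + 1) ^ q := by
  rcases lt_or_ge q x with hqx | hxq
  · have hx0 : 0 < x := hq.trans_lt hqx
    have h_exp : (1 + 1 / x) ^ q ≤ exp 1 := calc
      (1 + 1 / x) ^ q ≤ exp (1 / x) ^ q := by
        gcongr
        linarith [add_one_le_exp (1 / x)]
      _ = exp (q / x) := by rw [← exp_mul]; ring_nf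
      _ ≤ exp 1 := exp_le_exp.2 ((div_le_one hx0).2 hqx.le)
    calc (x + 1) ^ q = x ^ q * (1 + 1 / x) ^ q := by
          rw [← mul_rpow hx (by positivity)]; field_simp
      _ ≤ x ^ q * exp 1 := by gcongr
      _ ≤ exp 1 * x ^ q + (q + 1) ^ q := by nlinarith [rpow_nonneg (by linarith : 0 ≤ q + 1) q]
  · have := rpow_le_rpow (by linarith) (by linarith : x + 1 ≤ q + 1) hq
    nlinarith [rpow_nonneg hx q, exp_pos 1]

theorem le_bregmanAbsRpow_one_of_nonneg {p c : ℝ} (hp : 2 ≤ p) (hc : 0 ≤ c) :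
    p / 8 * |c| ^ (p - 2) + 1 / 2 ^ (p + 1) ≤ bregmanAbsRpow p c 1 := by
  have h_one : 1 ≤ bregmanAbsRpow p c 1 := by
    have h := mul_le_bregmanAbsRpow_one_of_mul_abs_le (c' := 0) (c := c) hp zero_le_one
      fun s hs => by
        rw [one_mul, zero_add, abs_of_nonneg hs.1, abs_of_nonneg (by linarith [hs.1])]
        linarith
    simpa [bregmanAbsRpow, zero_rpow (by linarith : p ≠ 0)] using h
  have h_sq := mul_rpow_le_bregmanAbsRpow_one (c := c) hp (abs_nonneg c) fun s hs => by
    rw [abs_of_nonneg hc, abs_of_nonneg (by linarith [hs.1])]; linarith [hs.1]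
  have hT : 0 ≤ |c| ^ (p - 2) := by positivity
  nlinarith [one_div_two_rpow_add_one_le hp,
    mul_nonneg hT (by nlinarith : 0 ≤ p * (p - 1) / 4 - p / 8)]

theorem le_bregmanAbsRpow_one_of_le_neg_one {p c : ℝ} (hp : 2 ≤ p) (hc : c ≤ -1) :
    p / 8 * |c| ^ (p - 2) + 1 / 2 ^ (p + 1) ≤ bregmanAbsRpow p c 1 := by
  have h := mul_le_bregmanAbsRpow_one_of_mul_abs_le (c' := -1) (c := c) hp (abs_nonneg c)
    fun s hs => by
      rw [abs_of_neg (by linarith), abs_of_nonpos (by linarith [hs.2]),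
        abs_of_nonpos (by linarith [hs.2])]
      nlinarith [hs.1]
  have h_neg_one : bregmanAbsRpow p (-1) 1 = p - 1 := by
    simp [bregmanAbsRpow, zero_rpow (by linarith : p ≠ 0)]
    ring
  have hT : 1 ≤ |c| ^ (p - 2) :=
    one_le_rpow (by rw [abs_of_neg (by linarith)]; linarith) (by linarith)
  rw [h_neg_one] at h
  nlinarith [one_div_two_rpow_add_one_le hp,
    mul_le_mul_of_nonneg_left hT (by linarith : 0 ≤ 7 * p / 8 - 1)]

theorem le_bregmanAbsRpow_one_of_mem_Icc {p c : ℝ} (hp : 2 ≤ p) (hc : c ∈ Icc (-1) 0) :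
    p / 8 * |c| ^ (p - 2) + 1 / 2 ^ (p + 1) ≤ bregmanAbsRpow p c 1 := by
  have h := le_one_sub_rpow_add_rpow_mul hp (abs_nonneg c)
    (by rw [abs_of_nonpos hc.2]; linarith [hc.1])
  rw [bregmanAbsRpow_one_eq (by linarith), abs_of_nonneg (by linarith [hc.1] : 0 ≤ c + 1)]
  rw [abs_of_nonpos hc.2] at h ⊢
  convert h using 2
  rw [sub_neg_eq_add, add_comm 1 c]
  ring

theorem le_bregmanAbsRpow_one {p : ℝ} (hp : 2 ≤ p) (c : ℝ) :
    p / 8 * |c| ^ (p - 2) + 1 / 2 ^ (p + 1) ≤ bregmanAbsRpow p c 1 := by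
  rcases le_or_gt 0 c with hc | hc
  · exact le_bregmanAbsRpow_one_of_nonneg hp hc
  rcases le_or_gt c (-1) with hc' | hc'
  · exact le_bregmanAbsRpow_one_of_le_neg_one hp hc'
  · exact le_bregmanAbsRpow_one_of_mem_Icc hp ⟨hc'.le, hc.le⟩

theorem bregmanAbsRpow_one_le {p : ℝ} (hp : 2 ≤ p) (c : ℝ) :
    bregmanAbsRpow p c 1 ≤ 2 * p ^ 2 * |c| ^ (p - 2) + p ^ p := by
  have h := bregmanAbsRpow_one_le_mul_rpow (M := |c| + 1) (c := c) hp fun s hs =>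
    (abs_add_le c s).trans (by rw [abs_of_nonneg hs.1]; linarith [hs.2])
  have h_add := add_one_rpow_le (by linarith : 0 ≤ p - 2) (abs_nonneg c)
  have h_pow : (p - 2 + 1) ^ (p - 2) ≤ p ^ (p - 2) :=
    rpow_le_rpow (by linarith) (by linarith) (by linarith)
  have h_pp : p ^ (2:ℝ) * p ^ (p - 2) = p ^ p := by
    rw [← rpow_add (by linarith)]; ring_nf
  rw [rpow_two] at h_pp
  have hpp : 0 ≤ p * (p - 1) / 2 := by nlinarith
  have h_exp : p * (p - 1) / 2 * exp 1 ≤ 2 * p ^ 2 := by nlinarith [exp_one_lt_d9]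
  calc bregmanAbsRpow p c 1
      ≤ p * (p - 1) / 2 * (exp 1 * |c| ^ (p - 2) + p ^ (p - 2)) :=
        h.trans (mul_le_mul_of_nonneg_left (h_add.trans (by linarith)) hpp)
    _ ≤ 2 * p ^ 2 * |c| ^ (p - 2) + p ^ 2 * p ^ (p - 2) := by
        rw [mul_add, ← mul_assoc]
        gcongr
        nlinarith
    _ = 2 * p ^ 2 * |c| ^ (p - 2) + p ^ p := by rw [h_pp]

theorem le_bregmanAbsRpow {p : ℝ} (hp : 2 ≤ p) (a d : ℝ) :
    p / 8 * (|a| ^ (p - 2) * d ^ 2) + 1 / 2 ^ (p + 1) * |d| ^ p ≤ bregmanAbsRpow p a d := by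
  have hp0 : p ≠ 0 := by linarith
  rcases eq_or_ne d 0 with rfl | hd
  · simp [bregmanAbsRpow, zero_rpow hp0]
  obtain ⟨c, rfl⟩ : ∃ c, a = d * c := ⟨a / d, by field_simp⟩
  rw [bregmanAbsRpow_mul_one hp0, abs_mul_rpow_sub_two_mul_sq hp0]
  nlinarith [mul_le_mul_of_nonneg_left (le_bregmanAbsRpow_one hp c) (by positivity : 0 ≤ |d| ^ p)]

theorem bregmanAbsRpow_le {p : ℝ} (hp : 2 ≤ p) (a d : ℝ) :
    bregmanAbsRpow p a d ≤ 2 * p ^ 2 * (|a| ^ (p - 2) * d ^ 2) + p ^ p * |d| ^ p := by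
  have hp0 : p ≠ 0 := by linarith
  rcases eq_or_ne d 0 with rfl | hd
  · simp [bregmanAbsRpow, zero_rpow hp0]
  obtain ⟨c, rfl⟩ : ∃ c, a = d * c := ⟨a / d, by field_simp⟩
  rw [bregmanAbsRpow_mul_one hp0, abs_mul_rpow_sub_two_mul_sq hp0]
  nlinarith [mul_le_mul_of_nonneg_left (bregmanAbsRpow_one_le hp c) (by positivity : 0 ≤ |d| ^ p)]

theorem stmt12 {n : ℕ} (p : ℝ) (hp : 2 ≤ p) (x δ : Fin n → ℝ) :
    (p / 8) * (∑ i, |x i| ^ (p - 2) * (δ i) ^ 2)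
        + (1 / 2 ^ (p + 1)) * (∑ i, |δ i| ^ p)
      ≤ (∑ i, |x i + δ i| ^ p) - (∑ i, |x i| ^ p)
          - ∑ i, (p * |x i| ^ (p - 2) * x i) * δ i ∧
    (∑ i, |x i + δ i| ^ p) - (∑ i, |x i| ^ p)
          - ∑ i, (p * |x i| ^ (p - 2) * x i) * δ i
      ≤ 2 * p ^ 2 * (∑ i, |x i| ^ (p - 2) * (δ i) ^ 2) + p ^ p * (∑ i, |δ i| ^ p) := by
  have h_sum : (∑ i, |x i + δ i| ^ p) - (∑ i, |x i| ^ p)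
      - ∑ i, (p * |x i| ^ (p - 2) * x i) * δ i = ∑ i, bregmanAbsRpow p (x i) (δ i) := by
    simp only [bregmanAbsRpow, Finset.sum_sub_distrib]
  simp only [h_sum, Finset.mul_sum, ← Finset.sum_add_distrib]
  exact ⟨Finset.sum_le_sum fun i _ => le_bregmanAbsRpow hp (x i) (δ i),
    Finset.sum_le_sum fun i _ => bregmanAbsRpow_le hp (x i) (δ i)⟩
end

section
/- Let $\mathcal{D} \subseteq \mathbb{R}^n$ be convex, $f : \mathcal{D} \to \mathbb{R}$ convex and differentiable, $\eta \in (0,1]$, $\kappa \geq 1$. Suppose for every $x \in \mathcal{D}$ there is a function $h_x$ with $\frac{1}{\eta} h_x(\eta \delta) \leq f(x+\delta) - f(x) - \langle \nabla f(x), \delta \rangle \leq h_x(\delta)$ whenever $x + \delta \in \mathcal{D}$ (and $x + \eta\delta \in \mathcal{D}$). If $\delta^{\sharp}$ satisfies $x + \delta^{\sharp} \in \mathcal{D}$ and $\langle \nabla f(x), \delta^{\sharp} \rangle + h_x(\delta^{\sharp}) \leq \frac{1}{\kappa}\min_{x+\delta \in \mathcal{D}} \left( \langle \nabla f(x), \delta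 \rangle + h_x(\delta) \right)$, then $f(x + \delta^{\sharp}) - f(x^*) \leq \left(1 - \frac{\eta}{\kappa}\right)\left(f(x) - f(x^*)\right)$, where $x^* \in \arg\min_{\mathcal{D}} f$. -/
open Real

theorem stmt14 {n : ℕ} (D : Set (EuclideanSpace ℝ (Fin n)))
    (hD : Convex ℝ D) (f : EuclideanSpace ℝ (Fin n) → ℝ)
    (hf : ConvexOn ℝ D f) (hdiff : ∀ x ∈ D, DifferentiableAt ℝ f x)
    (η κ : ℝ) (hη : η ∈ Set.Ioc (0:ℝ) 1) (hκ : 1 ≤ κ)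
    (h : EuclideanSpace ℝ (Fin n) → EuclideanSpace ℝ (Fin n) → ℝ)
    (hsandwich : ∀ x ∈ D, ∀ δ : EuclideanSpace ℝ (Fin n), x + δ ∈ D →
      (1 / η) * h x (η • δ) ≤ f (x + δ) - f x - fderiv ℝ f x δ ∧
      f (x + δ) - f x - fderiv ℝ f x δ ≤ h x δ)
    (x : EuclideanSpace ℝ (Fin n)) (hx : x ∈ D)
    (xstar : EuclideanSpace ℝ (Fin n)) (hxstar : xstar ∈ D)
    (hmin : ∀ y ∈ D, f xstar ≤ f y)
    (δs : EuclideanSpace ℝ (Fin n)) (hδs : x + δs ∈ D)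
    (happrox : fderiv ℝ f x δs + h x δs ≤
      (1 / κ) * sInf {v : ℝ | ∃ δ : EuclideanSpace ℝ (Fin n), x + δ ∈ D ∧
        v = fderiv ℝ f x δ + h x δ}) :
    f (x + δs) - f xstar ≤ (1 - η / κ) * (f x - f xstar) := by

  obtain ⟨hη0, hη1⟩ := hη
  have hκ0 : (0:ℝ) < κ := lt_of_lt_of_le one_pos hκ
  have h1 : f (x + δs) - f x ≤ fderiv ℝ f x δs + h x δs := by
    have := (hsandwich x hx δs hδs).2; linarith
  set S : Set ℝ := {v : ℝ | ∃ δ : EuclideanSpace ℝ (Fin n), x + δ ∈ D ∧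
      v = fderiv ℝ f x δ + h x δ} with hS
  have hbdd : BddBelow S := by
    refine ⟨f xstar - f x, ?_⟩
    rintro v ⟨δ, hδ, rfl⟩
    have h2 := (hsandwich x hx δ hδ).2
    have h3 := hmin _ hδ
    linarith
  have hmemD : x + η • (xstar - x) ∈ D := by
    have h0 := hD hx hxstar (by linarith : (0:ℝ) ≤ 1 - η) (le_of_lt hη0) (by ring)
    have he : x + η • (xstar - x) = (1 - η) • x + η • xstar := by module
    rw [he]; exact h0
  have hle : sInf S ≤ fderiv ℝ f x (η • (xstar - x)) + h x (η • (xstar - x)) :=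
    csInf_le hbdd ⟨η • (xstar - x), hmemD, rfl⟩
  have hxd : x + (xstar - x) ∈ D := by
    have hxe : x + (xstar - x) = xstar := by abel
    rw [hxe]; exact hxstar
  have h4 := (hsandwich x hx (xstar - x) hxd).1
  have hxe : x + (xstar - x) = xstar := by abel
  rw [hxe] at h4
  have hL : fderiv ℝ f x (η • (xstar - x)) = η * fderiv ℝ f x (xstar - x) := by
    simp [map_smul]
  have h5 : h x (η • (xstar - x)) ≤ η * (f xstar - f x - fderiv ℝ f x (xstar - x)) := by
    have h4' := mul_le_mul_of_nonneg_left h4 hη0.le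
    rwa [← mul_assoc, mul_one_div, div_self hη0.ne', one_mul] at h4'
  have h6 : fderiv ℝ f x (η • (xstar - x)) + h x (η • (xstar - x)) ≤
      η * (f xstar - f x) := by rw [hL]; nlinarith
  have h7 : sInf S ≤ η * (f xstar - f x) := le_trans hle h6
  have h9 : (1/κ) * sInf S ≤ (1/κ) * (η * (f xstar - f x)) :=
    mul_le_mul_of_nonneg_left h7 (by positivity)
  have hmx := hmin x hx
  have h10 : f (x + δs) - f x ≤ (η/κ) * (f xstar - f x) := by
    have h8 : (1/κ) * (η * (f xstar - f x)) = (η/κ) * (f xstar - f x) := by ring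
    calc f (x + δs) - f x ≤ fderiv ℝ f x δs + h x δs := h1
      _ ≤ (1/κ) * sInf S := happrox
      _ ≤ (η/κ) * (f xstar - f x) := h8 ▸ h9
  have hηκ : η / κ ≤ 1 := by
    rw [div_le_one hκ0]; linarith
  nlinarith [mul_le_mul_of_nonneg_right hηκ (sub_nonneg.mpr hmx)]
end
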